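/- Let ψ : ℝ → ℝ be a C^∞ function satisfying the ODE (E) at every t ∈ ℝ, with ψ(0) = 0 and ψ′(0) = 1. Then the function t ↦ ψ(t)² − ψ′(t)² is bounded on ℝ, i.e. there is M ∈ ℝ with |ψ(t)² − ψ′(t)²| ≤ M for all t ∈ ℝ. -/

import Mathlib

open Set

lemma monoIci {f f' : ℝ → ℝ} {T : ℝ} (hd : ∀ t ∈ Ici T, HasDerivAt f (f' t) t)
    (h0 : ∀ t ∈ Ioi T, 0 ≤ f' t) : MonotoneOn f (Ici T) := by
  apply monotoneOn_of_deriv_nonneg (convex_Ici T)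
  · exact fun t ht => (hd t ht).continuousAt.continuousWithinAt
  · intro t ht
    rw [interior_Ici] at ht
    exact (hd t (mem_Ici.2 (le_of_lt ht))).differentiableAt.differentiableWithinAt
  · intro t ht
    rw [interior_Ici] at ht
    rw [(hd t (mem_Ici.2 ht.le)).deriv]
    exact h0 t ht

lemma antiIci {f f' : ℝ → ℝ} {T : ℝ} (hd : ∀ t ∈ Ici T, HasDerivAt f (f' t) t)
    (h0 : ∀ t ∈ Ioi T, f' t ≤ 0) : AntitoneOn f (Ici T) := by
  apply antitoneOn_of_deriv_nonpos (convex_Ici T)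
  · exact fun t ht => (hd t ht).continuousAt.continuousWithinAt
  · intro t ht
    rw [interior_Ici] at ht
    exact (hd t (mem_Ici.2 (le_of_lt ht))).differentiableAt.differentiableWithinAt
  · intro t ht
    rw [interior_Ici] at ht
    rw [(hd t (mem_Ici.2 ht.le)).deriv]
    exact h0 t ht

lemma absBdd {f : ℝ → ℝ} (hf : Continuous f) (a b : ℝ) :
    ∃ C, ∀ t ∈ Icc a b, |f t| ≤ C := by
  obtain ⟨C, hC⟩ := (isCompact_Icc (a := a) (b := b)).exists_bound_of_continuousOn
    hf.continuousOn
  exact ⟨C, fun t ht => by simpa [Real.norm_eq_abs] using hC t ht⟩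

lemma zeroBetween {f : ℝ → ℝ} (hf : Continuous f) {a b : ℝ} (hab : a ≤ b)
    (h0 : (0 : ℝ) ∈ uIcc (f a) (f b)) : ∃ c ∈ Icc a b, f c = 0 := by
  obtain ⟨c, hc, hc0⟩ := intermediate_value_uIcc (f := f) hf.continuousOn h0
  rw [uIcc_of_le hab] at hc
  exact ⟨c, hc, hc0⟩

set_option maxHeartbeats 1000000 in
/-- The tail lemma: from a point where x ≥ 0, p > 0, z > 0, the quantity y = x²-p²
is bounded on [T,∞). -/
lemma tailLemma {x p w r : ℝ → ℝ}
    (hx : ∀ t, HasDerivAt x (p t) t) (hp : ∀ t, HasDerivAt p (w t) t)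
    (hw : ∀ t, HasDerivAt w (r t) t)
    (heq : ∀ t, p t * (r t - p t) = -((w t - x t) * (2 * (w t - x t) + 3 * x t)))
    {T : ℝ} (hxT : 0 ≤ x T) (hpT : 0 < p T) (hzT : 0 < w T - x T) :
    ∃ M, ∀ t ∈ Ici T, |x t ^ 2 - p t ^ 2| ≤ M := by
  have hpc : Continuous p := continuous_iff_continuousAt.2 fun t => (hp t).continuousAt
  have hz : ∀ t, HasDerivAt (fun s => w s - x s) (r t - p t) t := fun t => (hw t).sub (hx t)
  -- u = z * p^3 is nondecreasing
  have hu : ∀ t, HasDerivAt (fun s => (w s - x s) * p s ^ 3)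
      ((w t - x t) ^ 2 * p t ^ 2) t := by
    intro t
    have h1 := (hz t).mul ((hp t).pow 3)
    refine h1.congr_deriv ?_
    symm
    simp only [Pi.pow_apply, Pi.mul_apply, Pi.sub_apply]
    have h2 := heq t
    push_cast
    linear_combination (-(p t ^ 2)) * h2
  have humono : Monotone (fun s => (w s - x s) * p s ^ 3) := by
    apply monotone_of_hasDerivAt_nonneg hu
    intro t
    positivity
  have huT : 0 < (w T - x T) * p T ^ 3 := by positivity
  -- p > 0 on [T, ∞)
  have hpp : ∀ t ∈ Ici T, 0 < p t := by
    intro t ht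
    by_contra hle
    push_neg at hle
    rcases lt_or_eq_of_le hle with hlt | he
    · obtain ⟨c, hc, hc0⟩ := zeroBetween hpc (mem_Ici.1 ht)
        (mem_uIcc.2 (Or.inr ⟨hlt.le, hpT.le⟩))
      have h2 : (w T - x T) * p T ^ 3 ≤ (w c - x c) * p c ^ 3 := humono hc.1
      rw [hc0] at h2
      simp at h2
      nlinarith
    · have h2 : (w T - x T) * p T ^ 3 ≤ (w t - x t) * p t ^ 3 := humono (mem_Ici.1 ht)
      rw [he] at h2
      simp at h2
      nlinarith
  -- z > 0 on [T, ∞)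
  have hzp : ∀ t ∈ Ici T, 0 < w t - x t := by
    intro t ht
    have h3 : 0 < p t ^ 3 := pow_pos (hpp t ht) 3
    have h4 : 0 < (w t - x t) * p t ^ 3 := lt_of_lt_of_le huT (humono (mem_Ici.1 ht))
    nlinarith
  -- x is nonneg and monotone
  have hxmono : MonotoneOn x (Ici T) := monoIci (fun t _ => hx t)
    (fun t ht => (hpp t (mem_Ici.2 (le_of_lt ht))).le)
  have hxpos : ∀ t ∈ Ici T, 0 ≤ x t := fun t ht =>
    hxT.trans (hxmono self_mem_Ici ht (mem_Ici.1 ht))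
  -- p is monotone
  have hpmono : MonotoneOn p (Ici T) := monoIci (fun t _ => hp t)
    (fun t ht => by
      have h1 := hxpos t (mem_Ici.2 ht.le)
      have h2 := hzp t (mem_Ici.2 ht.le)
      linarith)
  have hpT' : ∀ t ∈ Ici T, p T ≤ p t := fun t ht =>
    hpmono self_mem_Ici ht (mem_Ici.1 ht)
  -- z is antitone
  have hzanti : AntitoneOn (fun s => w s - x s) (Ici T) := by
    apply antiIci (fun t _ => hz t)
    intro t ht
    have h1 := heq t
    have h2 := hpp t (mem_Ici.2 ht.le)
    have h3 := hzp t (mem_Ici.2 ht.le)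
    have h4 := hxpos t (mem_Ici.2 ht.le)
    nlinarith
  -- linear growth of x
  have hlin : ∀ t ∈ Ici T, x T + p T * (t - T) ≤ x t := by
    have hd : ∀ s, HasDerivAt (fun s => x s - p T * s) (p s - p T) s := by
      intro s
      exact ((hx s).sub ((hasDerivAt_id s).const_mul (p T))).congr_deriv (by ring)
    have hm : MonotoneOn (fun s => x s - p T * s) (Ici T) :=
      monoIci (fun s _ => hd s) (fun s hs => by
        have := hpT' s (mem_Ici.2 hs.le)
        linarith)
    intro t ht
    have h5 : x T - p T * T ≤ x t - p T * t := hm self_mem_Ici ht (mem_Ici.1 ht)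
    nlinarith
  -- after T1, z <= 3x
  set T₁ : ℝ := T + (w T - x T) / (3 * p T) with hT₁def
  have hT₁ : T ≤ T₁ := by
    rw [hT₁def]
    have : 0 ≤ (w T - x T) / (3 * p T) := by positivity
    linarith
  have h3xz : ∀ t, T₁ ≤ t → w t - x t ≤ 3 * x t := by
    intro t ht
    have htT : T ≤ t := le_trans hT₁ ht
    have h1 : w t - x t ≤ w T - x T := hzanti self_mem_Ici htT htT
    have h2 : x T + p T * (t - T) ≤ x t := hlin t htT
    have h3 : (w T - x T) / (3 * p T) ≤ t - T := by
      rw [hT₁def] at ht; linarith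
    have h4 : w T - x T ≤ (t - T) * (3 * p T) := by
      rw [div_le_iff₀ (by positivity)] at h3; exact h3
    nlinarith
  -- A = 4x^2 - p^2 is monotone on [T1, inf)
  have hA : ∀ t, HasDerivAt (fun s => 4 * x s ^ 2 - p s ^ 2)
      (8 * x t * p t - 2 * p t * w t) t := by
    intro t
    have h1 := (((hx t).pow 2).const_mul (4:ℝ)).sub ((hp t).pow 2)
    refine h1.congr_deriv ?_
    symm
    push_cast
    ring
  have hAmono : MonotoneOn (fun s => 4 * x s ^ 2 - p s ^ 2) (Ici T₁) := by
    apply monoIci (fun t _ => hA t)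
    intro t ht
    have htT : T ≤ t := le_trans hT₁ ht.le
    have h1 := hpp t htT
    have h2 := h3xz t ht.le
    nlinarith
  -- after T + 3, 8z <= p
  have hsig : ∀ t, T + 3 ≤ t → 8 * (w t - x t) ≤ p t := by
    have hσd : ∀ t ∈ Ici T, HasDerivAt (fun s => p s / (w s - x s))
        ((w t * (w t - x t) - p t * (r t - p t)) / (w t - x t) ^ 2) t :=
      fun t ht => (hp t).div (hz t) (ne_of_gt (hzp t ht))
    have hσ3 : ∀ t ∈ Ici T, 3 ≤ (w t * (w t - x t) - p t * (r t - p t)) / (w t - x t) ^ 2 := by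
      intro t ht
      have h2 := hzp t ht
      rw [le_div_iff₀ (by positivity)]
      have h1 := heq t
      have h3 := hxpos t ht
      nlinarith
    have hd2 : ∀ t ∈ Ici T, HasDerivAt (fun s => p s / (w s - x s) - 3 * s)
        ((w t * (w t - x t) - p t * (r t - p t)) / (w t - x t) ^ 2 - 3) t := by
      intro t ht
      exact ((hσd t ht).sub ((hasDerivAt_id t).const_mul (3:ℝ))).congr_deriv (by ring)
    have hm : MonotoneOn (fun s => p s / (w s - x s) - 3 * s) (Ici T) :=
      monoIci hd2 (fun t ht => by have := hσ3 t (mem_Ici.2 ht.le); linarith)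
    intro t ht
    have htT : T ≤ t := by linarith
    have h5 : p T / (w T - x T) - 3 * T ≤ p t / (w t - x t) - 3 * t :=
      hm self_mem_Ici htT htT
    have h6 : 0 < p T / (w T - x T) := by positivity
    have h7 : 9 ≤ p t / (w t - x t) := by linarith
    have h8 := hzp t htT
    rw [le_div_iff₀ h8] at h7
    linarith
  -- there is a point S where A S >= 0
  have hex : ∃ S, max T₁ (T + 3) ≤ S ∧ 0 ≤ 4 * x S ^ 2 - p S ^ 2 := by
    by_contra hcon
    push_neg at hcon
    set T₃ := max T₁ (T + 3) with hT₃def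
    have hT₃T : T ≤ T₃ := le_trans hT₁ (le_max_left _ _)
    have h2x : ∀ t, T₃ ≤ t → 2 * x t < p t := by
      intro t ht
      have h1 := hcon t ht
      have h2 := hxpos t (le_trans hT₃T ht)
      have h3 := hpp t (le_trans hT₃T ht)
      nlinarith
    have hqd : ∀ t ∈ Ici T, HasDerivAt (fun s => x s / p s)
        ((p t * p t - x t * w t) / p t ^ 2) t :=
      fun t ht => (hx t).div (hp t) (ne_of_gt (hpp t ht))
    have hq2 : ∀ t ∈ Ici T₃, (1:ℝ)/2 ≤ (p t * p t - x t * w t) / p t ^ 2 := by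
      intro t ht
      have htT : T ≤ t := le_trans hT₃T ht
      have h1 := hpp t htT
      rw [le_div_iff₀ (by positivity)]
      have h2 := h2x t ht
      have h3 := hxpos t htT
      have h4 := hsig t (le_trans (le_max_right _ _) ht)
      have h5 := hzp t htT
      nlinarith
    have hd2 : ∀ t ∈ Ici T₃, HasDerivAt (fun s => x s / p s - s / 2)
        ((p t * p t - x t * w t) / p t ^ 2 - 1/2) t := by
      intro t ht
      exact ((hqd t (le_trans hT₃T ht)).sub ((hasDerivAt_id t).div_const 2)).congr_deriv (by ring)
    have hm : MonotoneOn (fun s => x s / p s - s / 2) (Ici T₃) :=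
      monoIci hd2 (fun t ht => by have := hq2 t (mem_Ici.2 ht.le); linarith)
    have h5 : x T₃ / p T₃ - T₃ / 2 ≤ x (T₃ + 2) / p (T₃ + 2) - (T₃ + 2) / 2 :=
      hm self_mem_Ici (by simp only [mem_Ici]; linarith) (by linarith)
    have h6 : 0 ≤ x T₃ / p T₃ := div_nonneg (hxpos T₃ (mem_Ici.2 hT₃T)) (hpp T₃ (mem_Ici.2 hT₃T)).le
    have h7 : 1 ≤ x (T₃ + 2) / p (T₃ + 2) := by linarith
    have h8 := hpp (T₃ + 2) (mem_Ici.2 (by linarith))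
    rw [le_div_iff₀ h8] at h7
    have h9 := h2x (T₃ + 2) (by linarith)
    have h10 := hxpos (T₃ + 2) (mem_Ici.2 (by linarith))
    linarith
  obtain ⟨S, hST₃, hAS⟩ := hex
  have hST : T ≤ S := le_trans hT₁ (le_trans (le_max_left _ _) hST₃)
  have hApos : ∀ t, S ≤ t → 0 ≤ 4 * x t ^ 2 - p t ^ 2 := by
    intro t ht
    have h1 : (4 * x S ^ 2 - p S ^ 2) ≤ (4 * x t ^ 2 - p t ^ 2) :=
      hAmono (mem_Ici.2 (le_trans (le_max_left _ _) hST₃))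
        (mem_Ici.2 (le_trans (le_trans (le_max_left _ _) hST₃) ht)) ht
    linarith
  have hpx : ∀ t, S ≤ t → p t ≤ 2 * x t := by
    intro t ht
    have h1 := hApos t ht
    have h2 := hxpos t (mem_Ici.2 (le_trans hST ht))
    have h3 := hpp t (mem_Ici.2 (le_trans hST ht))
    nlinarith
  -- D = z p^2 decays: B = D e^{t/2} is antitone on [S, inf)
  have hD : ∀ t, HasDerivAt (fun s => (w s - x s) * p s ^ 2)
      (-(x t * (w t - x t) * p t)) t := by
    intro t
    have h1 := (hz t).mul ((hp t).pow 2)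
    refine h1.congr_deriv ?_
    symm
    simp only [Pi.pow_apply, Pi.mul_apply, Pi.sub_apply]
    have h2 := heq t
    push_cast
    linear_combination (-(p t)) * h2
  have hexp : ∀ t : ℝ, HasDerivAt (fun s : ℝ => Real.exp (s / 2))
      (Real.exp (t/2) * (1/2)) t := fun t => ((hasDerivAt_id t).div_const 2).exp
  have hB : ∀ t, HasDerivAt (fun s => (w s - x s) * p s ^ 2 * Real.exp (s / 2))
      (-(x t * (w t - x t) * p t) * Real.exp (t/2)
        + (w t - x t) * p t ^ 2 * (Real.exp (t/2) * (1/2))) t :=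
    fun t => (hD t).mul (hexp t)
  have hBanti : AntitoneOn (fun s => (w s - x s) * p s ^ 2 * Real.exp (s / 2)) (Ici S) := by
    apply antiIci (fun t _ => hB t)
    intro t ht
    have htT : T ≤ t := le_trans hST ht.le
    have h1 := hpx t ht.le
    have h2 := hpp t (mem_Ici.2 htT)
    have h3 := hzp t (mem_Ici.2 htT)
    have key : -(x t * (w t - x t) * p t) * Real.exp (t/2)
        + (w t - x t) * p t ^ 2 * (Real.exp (t/2) * (1/2))
        = Real.exp (t/2) * ((w t - x t) * p t) * (p t / 2 - x t) := by ring
    rw [key]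
    apply mul_nonpos_of_nonneg_of_nonpos
    · positivity
    · linarith
  have hDbd : ∀ t, S ≤ t →
      (w t - x t) * p t ^ 2 * Real.exp (t / 2)
        ≤ (w S - x S) * p S ^ 2 * Real.exp (S / 2) :=
    fun t ht => hBanti self_mem_Ici (mem_Ici.2 ht) ht
  set K := (w S - x S) * p S ^ 2 * Real.exp (S / 2) with hKdef
  have hKpos : 0 < K := by
    have h1 := hzp S (mem_Ici.2 hST)
    have h2 := hpp S (mem_Ici.2 hST)
    positivity
  -- y bounds
  have hy : ∀ t, HasDerivAt (fun s => x s ^ 2 - p s ^ 2)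
      (-(2 * p t * (w t - x t))) t := by
    intro t
    have h1 := ((hx t).pow 2).sub ((hp t).pow 2)
    refine h1.congr_deriv ?_
    symm
    push_cast
    ring
  have hyanti : AntitoneOn (fun s => x s ^ 2 - p s ^ 2) (Ici T) := by
    apply antiIci (fun t _ => hy t)
    intro t ht
    have h2 := hpp t (mem_Ici.2 ht.le)
    have h3 := hzp t (mem_Ici.2 ht.le)
    nlinarith
  -- lower bound for y on [S, inf)
  set c := 4 * K / p T with hcdef
  have hcpos : 0 < c := by positivity
  have hcp : c * p T = 4 * K := by
    rw [hcdef]; field_simp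
  have hexp2 : ∀ t : ℝ, HasDerivAt (fun s : ℝ => Real.exp (-(s / 2)))
      (Real.exp (-(t/2)) * (-(1/2))) t := fun t => ((hasDerivAt_id t).div_const 2).neg.exp
  have hΦd : ∀ t, HasDerivAt (fun s => x s ^ 2 - p s ^ 2 - c * Real.exp (-(s/2)))
      (-(2 * p t * (w t - x t)) - c * (Real.exp (-(t/2)) * (-(1/2)))) t :=
    fun t => (hy t).sub ((hexp2 t).const_mul c)
  have hΦmono : MonotoneOn (fun s => x s ^ 2 - p s ^ 2 - c * Real.exp (-(s/2))) (Ici S) := by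
    apply monoIci (fun t _ => hΦd t)
    intro t ht
    have htT : T ≤ t := le_trans hST ht.le
    have h1 := hDbd t ht.le
    have h2 := hpp t (mem_Ici.2 htT)
    have h3 := hzp t (mem_Ici.2 htT)
    have h4 := hpT' t (mem_Ici.2 htT)
    have hE2 : 0 < Real.exp (t/2) := Real.exp_pos _
    have hE1 : Real.exp (t/2) * Real.exp (-(t/2)) = 1 := by
      rw [← Real.exp_add]; norm_num
    have h5 : (w t - x t) * p t ^ 2 ≤ K * Real.exp (-(t/2)) := by
      have h6 := mul_le_mul_of_nonneg_right h1 (Real.exp_pos (-(t/2))).le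
      rw [mul_assoc, hE1, mul_one] at h6
      exact h6
    have suff : 2 * p t * (w t - x t) ≤ c / 2 * Real.exp (-(t/2)) := by
      apply le_of_mul_le_mul_right _ hpT
      have e1 : 2 * p t * (w t - x t) * p T ≤ 2 * ((w t - x t) * p t ^ 2) := by
        nlinarith [mul_le_mul_of_nonneg_left h4 (mul_nonneg h3.le h2.le)]
      have e4 : c / 2 * Real.exp (-(t/2)) * p T = 2 * (K * Real.exp (-(t/2))) := by
        have : c * p T * Real.exp (-(t/2)) = 4 * K * Real.exp (-(t/2)) := by rw [hcp]
        linarith [this]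
      linarith [h5, e1, e4]
    linarith [suff]
  have hlow : ∀ t, S ≤ t → x S ^ 2 - p S ^ 2 - c * Real.exp (-(S/2)) ≤ x t ^ 2 - p t ^ 2 := by
    intro t ht
    have h1 : x S ^ 2 - p S ^ 2 - c * Real.exp (-(S/2))
        ≤ x t ^ 2 - p t ^ 2 - c * Real.exp (-(t/2)) :=
      hΦmono self_mem_Ici (mem_Ici.2 ht) ht
    have h2 : 0 < Real.exp (-(t/2)) := Real.exp_pos _
    nlinarith
  -- assemble
  have hxc : Continuous x := continuous_iff_continuousAt.2 fun t => (hx t).continuousAt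
  obtain ⟨C, hC⟩ := absBdd (f := fun s => x s ^ 2 - p s ^ 2)
    ((hxc.pow 2).sub (hpc.pow 2)) T S
  set mS := x S ^ 2 - p S ^ 2 - c * Real.exp (-(S/2)) with hmSdef
  refine ⟨max C (max |x T ^ 2 - p T ^ 2| |mS|), ?_⟩
  intro t ht
  rcases le_total t S with h | h
  · exact le_trans (hC t ⟨mem_Ici.1 ht, h⟩) (le_max_left _ _)
  · have hST' : S ∈ Ici T := mem_Ici.2 hST
    have htT : t ∈ Ici T := mem_Ici.2 (le_trans hST h)
    have hup : x t ^ 2 - p t ^ 2 ≤ x T ^ 2 - p T ^ 2 :=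
      hyanti self_mem_Ici htT (mem_Ici.1 htT)
    have hlo : mS ≤ x t ^ 2 - p t ^ 2 := hlow t h
    apply le_trans _ (le_max_right C _)
    rw [abs_le]
    constructor
    · linarith [neg_abs_le mS, le_max_right (|x T ^ 2 - p T ^ 2|) (|mS|)]
    · linarith [le_abs_self (x T ^ 2 - p T ^ 2), le_max_left (|x T ^ 2 - p T ^ 2|) (|mS|)]


set_option maxHeartbeats 1000000 in
/-- Main half-line lemma: a global solution with x(0)=0, x'(0)=1 has y = x²-p² bounded
on [0,∞). -/
lemma halfLine {x p w r : ℝ → ℝ}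
    (hx : ∀ t, HasDerivAt x (p t) t) (hp : ∀ t, HasDerivAt p (w t) t)
    (hw : ∀ t, HasDerivAt w (r t) t)
    (heq : ∀ t, p t * (r t - p t) = -((w t - x t) * (2 * (w t - x t) + 3 * x t)))
    (hx0 : x 0 = 0) (hp0 : p 0 = 1) :
    ∃ M, ∀ t ∈ Ici (0:ℝ), |x t ^ 2 - p t ^ 2| ≤ M := by
  have hxc : Continuous x := continuous_iff_continuousAt.2 fun t => (hx t).continuousAt
  have hpc : Continuous p := continuous_iff_continuousAt.2 fun t => (hp t).continuousAt
  have hyc : Continuous fun s => x s ^ 2 - p s ^ 2 := (hxc.pow 2).sub (hpc.pow 2)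
  have hz : ∀ t, HasDerivAt (fun s => w s - x s) (r t - p t) t := fun t => (hw t).sub (hx t)
  have hu : ∀ t, HasDerivAt (fun s => (w s - x s) * p s ^ 3)
      ((w t - x t) ^ 2 * p t ^ 2) t := by
    intro t
    have h1 := (hz t).mul ((hp t).pow 3)
    refine h1.congr_deriv ?_
    symm
    simp only [Pi.pow_apply, Pi.mul_apply, Pi.sub_apply]
    have h2 := heq t
    push_cast
    linear_combination (-(p t ^ 2)) * h2
  have humono : Monotone (fun s => (w s - x s) * p s ^ 3) := by
    apply monotone_of_hasDerivAt_nonneg hu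
    intro t
    positivity
  have hy : ∀ t, HasDerivAt (fun s => x s ^ 2 - p s ^ 2)
      (-(2 * p t * (w t - x t))) t := by
    intro t
    have h1 := ((hx t).pow 2).sub ((hp t).pow 2)
    refine h1.congr_deriv ?_
    symm
    push_cast
    ring
  -- first integral: y² = 1 + 4 x z p²
  have hfi : ∀ t, (x t ^ 2 - p t ^ 2) ^ 2 = 1 + 4 * x t * (w t - x t) * p t ^ 2 := by
    have hg : ∀ t, HasDerivAt
        (fun s => 4 * (x s * (w s - x s) * p s ^ 2) - (x s ^ 2 - p s ^ 2) ^ 2) 0 t := by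
      intro t
      have h1 := (((hx t).mul (hz t)).mul ((hp t).pow 2)).const_mul (4:ℝ)
      have h2 := (((hx t).pow 2).sub ((hp t).pow 2)).pow 2
      have h3 := h1.sub h2
      refine h3.congr_deriv ?_
      symm
      simp only [Pi.pow_apply, Pi.mul_apply, Pi.sub_apply]
      have h4 := heq t
      push_cast
      linear_combination (-(4 * x t * p t)) * h4
    have hcst : ∀ t, (fun s => 4 * (x s * (w s - x s) * p s ^ 2) - (x s ^ 2 - p s ^ 2) ^ 2) t
        = (fun s => 4 * (x s * (w s - x s) * p s ^ 2) - (x s ^ 2 - p s ^ 2) ^ 2) 0 :=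
      fun t => is_const_of_deriv_eq_zero
        (fun s => (hg s).differentiableAt) (fun s => (hg s).deriv) t 0
    intro t
    have h5 := hcst t
    simp only at h5
    rw [hx0, hp0] at h5
    nlinarith [h5]
  -- main case analysis
  by_cases hP : ∃ t₁, 0 ≤ t₁ ∧ 0 < (w t₁ - x t₁) * p t₁ ^ 3
  · obtain ⟨ρ, hρ0, hρu⟩ := hP
    have hupos : ∀ t, ρ ≤ t → 0 < (w t - x t) * p t ^ 3 :=
      fun t ht => lt_of_lt_of_le hρu (humono ht)
    have hpne : ∀ t, ρ ≤ t → p t ≠ 0 := by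
      intro t ht hc
      have := hupos t ht
      rw [hc] at this
      simp at this
    rcases lt_or_gt_of_ne (hpne ρ le_rfl) with hneg | hpos
    · -- p < 0 on [ρ,∞)
      have hpn : ∀ t, ρ ≤ t → p t < 0 := by
        intro t ht
        rcases lt_or_gt_of_ne (hpne t ht) with h | h
        · exact h
        · exfalso
          obtain ⟨c, hc, hc0⟩ := zeroBetween hpc ht
            (mem_uIcc.2 (Or.inl ⟨hneg.le, h.le⟩))
          exact hpne c (hc.1) hc0
      have hzn : ∀ t, ρ ≤ t → w t - x t < 0 := by
        intro t ht
        have h1 := hupos t ht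
        have h2 := hpn t ht
        nlinarith [pow_pos (neg_pos.2 h2) 3]
      by_cases hx9 : ∃ t₉, ρ ≤ t₉ ∧ x t₉ ≤ 0
      · obtain ⟨t₉, ht₉ρ, ht₉x⟩ := hx9
        have hrefl : ∀ t, (-(p t)) * ((-(r t)) - (-(p t)))
            = -(((-(w t)) - (-(x t))) * (2 * ((-(w t)) - (-(x t))) + 3 * (-(x t)))) := by
          intro t
          linear_combination heq t
        obtain ⟨M1, hM1⟩ := tailLemma (x := fun s => -(x s)) (p := fun s => -(p s))
          (w := fun s => -(w s)) (r := fun s => -(r s))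
          (fun t => (hx t).neg) (fun t => (hp t).neg) (fun t => (hw t).neg) hrefl
          (T := t₉) (by linarith) (by linarith [hpn t₉ ht₉ρ])
          (by linarith [hzn t₉ ht₉ρ])
        obtain ⟨C, hC⟩ := absBdd hyc 0 t₉
        refine ⟨max C M1, ?_⟩
        intro t ht
        rcases le_total t t₉ with h | h
        · exact le_trans (hC t ⟨mem_Ici.1 ht, h⟩) (le_max_left _ _)
        · have h2 := hM1 t (mem_Ici.2 h)
          simp only [neg_sub_neg, neg_sq] at h2
          exact le_trans h2 (le_max_right _ _)
      · push_neg at hx9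
        obtain ⟨C, hC⟩ := absBdd hyc 0 ρ
        refine ⟨max C 1, ?_⟩
        intro t ht
        rcases le_total t ρ with h | h
        · exact le_trans (hC t ⟨mem_Ici.1 ht, h⟩) (le_max_left _ _)
        · have h1 := hx9 t h
          have h2 := hzn t h
          have h3 := hfi t
          have h4 : x t * (w t - x t) ≤ 0 :=
            mul_nonpos_of_nonneg_of_nonpos h1.le h2.le
          have h5 : (x t ^ 2 - p t ^ 2) ^ 2 ≤ 1 := by nlinarith [sq_nonneg (p t)]
          apply le_trans _ (le_max_right C 1)
          rw [abs_le]
          constructor <;> nlinarith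
    · -- p > 0 on [ρ,∞)
      have hpp : ∀ t, ρ ≤ t → 0 < p t := by
        intro t ht
        rcases lt_or_gt_of_ne (hpne t ht) with h | h
        · exfalso
          obtain ⟨c, hc, hc0⟩ := zeroBetween hpc ht
            (mem_uIcc.2 (Or.inr ⟨h.le, hpos.le⟩))
          exact hpne c (hc.1) hc0
        · exact h
      have hzp : ∀ t, ρ ≤ t → 0 < w t - x t := by
        intro t ht
        have h1 := hupos t ht
        have h2 := hpp t ht
        nlinarith [pow_pos h2 3]
      by_cases hx9 : ∃ t₉, ρ ≤ t₉ ∧ 0 ≤ x t₉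
      · obtain ⟨t₉, ht₉ρ, ht₉x⟩ := hx9
        obtain ⟨M1, hM1⟩ := tailLemma hx hp hw heq (T := t₉)
          ht₉x (hpp t₉ ht₉ρ) (hzp t₉ ht₉ρ)
        obtain ⟨C, hC⟩ := absBdd hyc 0 t₉
        refine ⟨max C M1, ?_⟩
        intro t ht
        rcases le_total t t₉ with h | h
        · exact le_trans (hC t ⟨mem_Ici.1 ht, h⟩) (le_max_left _ _)
        · exact le_trans (hM1 t (mem_Ici.2 h)) (le_max_right _ _)
      · push_neg at hx9
        obtain ⟨C, hC⟩ := absBdd hyc 0 ρ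
        refine ⟨max C 1, ?_⟩
        intro t ht
        rcases le_total t ρ with h | h
        · exact le_trans (hC t ⟨mem_Ici.1 ht, h⟩) (le_max_left _ _)
        · have h1 := hx9 t h
          have h2 := hzp t h
          have h3 := hfi t
          have h4 : x t * (w t - x t) ≤ 0 :=
            mul_nonpos_of_nonpos_of_nonneg h1.le h2.le
          have h5 : (x t ^ 2 - p t ^ 2) ^ 2 ≤ 1 := by nlinarith [sq_nonneg (p t)]
          apply le_trans _ (le_max_right C 1)
          rw [abs_le]
          constructor <;> nlinarith
  · push_neg at hP
    by_cases hZ : ∃ ts, 0 ≤ ts ∧ (w ts - x ts) * p ts ^ 3 = 0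
    · -- u ≡ 0 on [ts, ∞), y is constant there
      obtain ⟨ts, hts0, htsu⟩ := hZ
      have huz : ∀ t, ts ≤ t → (w t - x t) * p t ^ 3 = 0 := by
        intro t ht
        refine le_antisymm ?_ ?_
        · exact hP t (le_trans hts0 ht)
        · rw [← htsu]; exact humono ht
      have hzp0 : ∀ t, ts < t → -(2 * p t * (w t - x t)) = 0 := by
        intro t ht
        have hev : (fun s => (w s - x s) * p s ^ 3) =ᶠ[nhds t] fun _ => (0:ℝ) :=
          Filter.eventuallyEq_of_mem (isOpen_Ioi.mem_nhds ht)
            (fun s hs => huz s (le_of_lt hs))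
        have hd0 : deriv (fun s => (w s - x s) * p s ^ 3) t = 0 := by
          rw [hev.deriv_eq]
          simp
        have hd1 : (w t - x t) ^ 2 * p t ^ 2 = 0 := by
          rw [← (hu t).deriv]
          exact hd0
        have h8 : ((w t - x t) * p t) ^ 2 = 0 := by linear_combination hd1
        have h7 : (w t - x t) * p t = 0 := by
          exact (pow_eq_zero_iff (by norm_num : (2:ℕ) ≠ 0)).1 h8
        linarith [h7]
      have hymono : MonotoneOn (fun s => x s ^ 2 - p s ^ 2) (Ici ts) :=
        monoIci (fun t _ => hy t) (fun t ht => le_of_eq (hzp0 t ht).symm)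
      have hyanti : AntitoneOn (fun s => x s ^ 2 - p s ^ 2) (Ici ts) :=
        antiIci (fun t _ => hy t) (fun t ht => le_of_eq (hzp0 t ht))
      obtain ⟨C, hC⟩ := absBdd hyc 0 ts
      refine ⟨C, ?_⟩
      intro t ht
      rcases le_total t ts with h | h
      · exact hC t ⟨mem_Ici.1 ht, h⟩
      · have h1 : x t ^ 2 - p t ^ 2 ≤ x ts ^ 2 - p ts ^ 2 :=
          hyanti self_mem_Ici (mem_Ici.2 h) h
        have h2 : x ts ^ 2 - p ts ^ 2 ≤ x t ^ 2 - p t ^ 2 :=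
          hymono self_mem_Ici (mem_Ici.2 h) h
        have h3 : x t ^ 2 - p t ^ 2 = x ts ^ 2 - p ts ^ 2 := le_antisymm h1 h2
        rw [h3]
        exact hC ts ⟨hts0, le_rfl⟩
    · -- u < 0 on [0, ∞)
      push_neg at hZ
      have hun : ∀ t, 0 ≤ t → (w t - x t) * p t ^ 3 < 0 := by
        intro t ht
        rcases lt_trichotomy ((w t - x t) * p t ^ 3) 0 with h | h | h
        · exact h
        · exact absurd h (hZ t ht)
        · exact absurd (lt_of_lt_of_le h (le_of_eq rfl)) (by
            have := hP t ht
            intro _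
            linarith)
      have hpp : ∀ t, 0 ≤ t → 0 < p t := by
        intro t ht
        have hne : p t ≠ 0 := by
          intro hc
          have := hun t ht
          rw [hc] at this
          simp at this
        rcases lt_or_gt_of_ne hne with h | h
        · exfalso
          obtain ⟨c, hc, hc0⟩ := zeroBetween hpc ht
            (mem_uIcc.2 (Or.inr ⟨h.le, by rw [hp0]; norm_num⟩))
          have := hun c hc.1
          rw [hc0] at this
          simp at this
        · exact h
      have hzn : ∀ t, 0 ≤ t → w t - x t < 0 := by
        intro t ht
        have h1 := hun t ht
        have h2 := hpp t ht
        nlinarith [pow_pos h2 3]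
      have hxmono : MonotoneOn x (Ici (0:ℝ)) :=
        monoIci (fun t _ => hx t) (fun t ht => (hpp t ht.le).le)
      have hxnn : ∀ t, 0 ≤ t → 0 ≤ x t := by
        intro t ht
        have := hxmono self_mem_Ici (mem_Ici.2 ht) ht
        rw [hx0] at this
        exact this
      refine ⟨1, ?_⟩
      intro t ht
      have ht' := mem_Ici.1 ht
      have h1 := hxnn t ht'
      have h2 := hzn t ht'
      have h3 := hfi t
      have h4 : x t * (w t - x t) ≤ 0 := mul_nonpos_of_nonneg_of_nonpos h1 h2.le
      have h5 : (x t ^ 2 - p t ^ 2) ^ 2 ≤ 1 := by nlinarith [sq_nonneg (p t)]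
      rw [abs_le]
      constructor <;> nlinarith

/-- The ODE (E): x′·x‴ = x·x″ − 2·x″² + x′² + x² at the point `t`. -/
def SatE (x : ℝ → ℝ) (t : ℝ) : Prop :=
  deriv x t * deriv (deriv (deriv x)) t =
    x t * deriv (deriv x) t - 2 * (deriv (deriv x) t) ^ 2 + (deriv x t) ^ 2 + (x t) ^ 2

theorem stmt11 (ψ : ℝ → ℝ) (hψ : ContDiff ℝ (⊤ : ℕ∞) ψ) (hE : ∀ t : ℝ, SatE ψ t)
    (h0 : ψ 0 = 0) (h1 : deriv ψ 0 = 1) :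
    ∃ M : ℝ, ∀ t : ℝ, |(ψ t) ^ 2 - (deriv ψ t) ^ 2| ≤ M := by
  set p := deriv ψ with hpdef
  set w := deriv p with hwdef
  set r := deriv w with hrdef
  have hψ1 : ContDiff ℝ (((⊤ : ℕ∞) : WithTop ℕ∞)) ψ := hψ.of_le (by simp)
  have hψ2 : ContDiff ℝ (((⊤ : ℕ∞) : WithTop ℕ∞)) p := (contDiff_infty_iff_deriv.mp hψ1).2
  have hψ3 : ContDiff ℝ (((⊤ : ℕ∞) : WithTop ℕ∞)) w := (contDiff_infty_iff_deriv.mp hψ2).2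
  have hx : ∀ t, HasDerivAt ψ (p t) t :=
    fun t => ((contDiff_infty_iff_deriv.mp hψ1).1 t).hasDerivAt
  have hp : ∀ t, HasDerivAt p (w t) t :=
    fun t => ((contDiff_infty_iff_deriv.mp hψ2).1 t).hasDerivAt
  have hw : ∀ t, HasDerivAt w (r t) t :=
    fun t => ((contDiff_infty_iff_deriv.mp hψ3).1 t).hasDerivAt
  have heq : ∀ t, p t * (r t - p t) = -((w t - ψ t) * (2 * (w t - ψ t) + 3 * ψ t)) := by
    intro t
    have h2 := hE t
    unfold SatE at h2
    rw [← hpdef, ← hwdef] at h2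
    linear_combination h2
  obtain ⟨M1, hM1⟩ := halfLine hx hp hw heq h0 h1
  -- time-reversed, reflected solution
  have hneg : ∀ t : ℝ, HasDerivAt (fun s : ℝ => -s) (-1) t :=
    fun t => (hasDerivAt_id t).neg
  have hxφ : ∀ t, HasDerivAt (fun s => -ψ (-s)) (p (-t)) t := by
    intro t
    have := ((hx (-t)).comp t (hneg t)).neg
    exact this.congr_deriv (by ring)
  have hpφ : ∀ t, HasDerivAt (fun s => p (-s)) (-w (-t)) t := by
    intro t
    have := (hp (-t)).comp t (hneg t)
    exact this.congr_deriv (by ring)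
  have hwφ : ∀ t, HasDerivAt (fun s => -w (-s)) (r (-t)) t := by
    intro t
    have := ((hw (-t)).comp t (hneg t)).neg
    exact this.congr_deriv (by ring)
  have heqφ : ∀ t, (fun s => p (-s)) t * (r (-t) - (fun s => p (-s)) t)
      = -(((-w (-t)) - (-ψ (-t))) * (2 * ((-w (-t)) - (-ψ (-t))) + 3 * (-ψ (-t)))) := by
    intro t
    simp only
    linear_combination heq (-t)
  obtain ⟨M2, hM2⟩ := halfLine (x := fun s => -ψ (-s)) (p := fun s => p (-s))
    (w := fun s => -w (-s)) (r := fun s => r (-s)) hxφ hpφ hwφ heqφ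
    (by simp [h0]) (by simpa using h1)
  refine ⟨max M1 M2, ?_⟩
  intro t
  rcases le_total 0 t with h | h
  · exact le_trans (hM1 t (Set.mem_Ici.2 h)) (le_max_left _ _)
  · have h2 := hM2 (-t) (Set.mem_Ici.2 (by linarith))
    simp only [neg_neg, neg_sq] at h2
    exact le_trans h2 (le_max_right _ _)
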